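/- arXiv:1703.05814 — 3 statements merged into one kernel-verified Lean document; each statement's English description precedes it below -/
import Mathlib

section
/- Suppose the heat-flux input satisfies q_c(t) > 0 for all t in a finite time interval (0, t̄), and the initial temperature satisfies T(x,0) ≥ T_m for all x ∈ [0, s(0)]. Then the model-validity condition holds: T(x,t) ≥ T_m for all t ∈ (0, t̄) and all x ∈ [0, s(t)]. -/
/-!
Weak minimum principle with a time penalty. For `ε > 0` the function `T x τ + ε τ` attains its
minimum on the compact region `{0 ≤ τ ≤ t, 0 ≤ x ≤ s τ}`. At a minimizer with `τ > 0` and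
`0 < x < s τ` one would have `T_τ ≤ -ε < 0 ≤ α T_xx`, contradicting the heat equation; at a
minimizer with `τ > 0` and `x = 0` one would have `T_x(0, τ) ≥ 0`, contradicting
`-k T_x(0, τ) = q_c(τ) > 0`. Hence the minimum lies at `τ = 0` or on the interface `x = s τ`,
where `T ≥ T_m`. Letting `ε → 0` gives `T ≥ T_m`.
-/

open Set Filter Topology

theorem IsLocalMinOn.deriv_nonneg_of_Ici {f : ℝ → ℝ} {a : ℝ} (h : IsLocalMinOn f (Ici a) a) :
    0 ≤ deriv f a := by
  by_cases hf : DifferentiableAt ℝ f a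
  · have hslope : Tendsto (slope f a) (𝓝[>] a) (𝓝 (deriv f a)) :=
      (hasDerivAt_iff_tendsto_slope.mp hf.hasDerivAt).mono_left
        (nhdsWithin_mono _ fun y hy => ne_of_gt hy)
    refine ge_of_tendsto hslope ?_
    filter_upwards [h.filter_mono (nhdsWithin_mono _ Ioi_subset_Ici_self), self_mem_nhdsWithin]
      with y hfy hy
    rw [slope_def_field]
    exact div_nonneg (sub_nonneg.2 hfy) (sub_nonneg.2 (le_of_lt hy))
  · rw [deriv_zero_of_not_differentiableAt hf]

theorem IsLocalMinOn.deriv_nonpos_of_Iic {f : ℝ → ℝ} {a : ℝ} (h : IsLocalMinOn f (Iic a) a) :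
    deriv f a ≤ 0 := by
  by_cases hf : DifferentiableAt ℝ f a
  · have hslope : Tendsto (slope f a) (𝓝[<] a) (𝓝 (deriv f a)) :=
      (hasDerivAt_iff_tendsto_slope.mp hf.hasDerivAt).mono_left
        (nhdsWithin_mono _ fun y hy => ne_of_lt hy)
    refine le_of_tendsto hslope ?_
    filter_upwards [h.filter_mono (nhdsWithin_mono _ Iio_subset_Iic_self), self_mem_nhdsWithin]
      with y hfy hy
    rw [slope_def_field]
    exact div_nonpos_of_nonneg_of_nonpos (sub_nonneg.2 hfy) (sub_nonpos.2 (le_of_lt hy))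
  · rw [deriv_zero_of_not_differentiableAt hf]

/-- If `f'' a < 0`, the second derivative test makes `a` also a local maximum, so `f` is locally
constant and `f'' a = 0` after all. -/
theorem IsLocalMin.deriv_deriv_nonneg {f : ℝ → ℝ} {a : ℝ} (h : IsLocalMin f a)
    (hf : ContinuousAt f a) : 0 ≤ deriv (deriv f) a := by
  by_contra! hneg
  have hconst : f =ᶠ[𝓝 a] fun _ => f a :=
    (h.and (isLocalMax_of_deriv_deriv_neg hneg h.deriv_eq_zero hf)).mono
      fun y hy => le_antisymm hy.2 hy.1
  have hderiv : deriv f =ᶠ[𝓝 a] fun _ => 0 :=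
    hconst.eventuallyEq_nhds.mono fun y hy => by rw [hy.deriv_eq, deriv_const]
  rw [hderiv.deriv_eq, deriv_const] at hneg
  exact lt_irrefl _ hneg

def spaceTimeDomain (s : ℝ → ℝ) (t : ℝ) : Set (ℝ × ℝ) :=
  {p | p.2 ∈ Icc 0 t ∧ p.1 ∈ Icc 0 (s p.2)}

theorem isCompact_spaceTimeDomain {s : ℝ → ℝ} {t : ℝ} (hs : ContinuousOn s (Icc 0 t)) :
    IsCompact (spaceTimeDomain s t) := by
  obtain ⟨M, hM⟩ := isCompact_Icc.bddAbove_image hs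
  have hclosed : IsClosed {p ∈ Ici (0:ℝ) ×ˢ Icc 0 t | p.1 ≤ s p.2} :=
    (isClosed_Ici.prod isClosed_Icc).isClosed_le continuous_fst.continuousOn
      (hs.comp continuous_snd.continuousOn fun p hp => hp.2)
  have hD : spaceTimeDomain s t = {p ∈ Ici (0:ℝ) ×ˢ Icc 0 t | p.1 ≤ s p.2} := by
    ext p
    simp only [spaceTimeDomain, mem_ofPred_eq, mem_prod, mem_Icc, mem_Ici]
    tauto
  rw [hD]
  refine (isCompact_Icc.prod isCompact_Icc : IsCompact (Icc 0 M ×ˢ Icc 0 t)).of_isClosed_subset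
    hclosed ?_
  rintro p ⟨⟨hp₁, hp₂⟩, hps⟩
  exact ⟨⟨hp₁, hps.trans (hM ⟨p.2, hp₂, rfl⟩)⟩, hp₂⟩

section Minimizer

variable {T : ℝ → ℝ → ℝ} {s : ℝ → ℝ} {t ε x₀ t₀ : ℝ}

theorem IsMinOn.isMinOn_spaceSlice
    (hmin : IsMinOn (fun p : ℝ × ℝ => T p.1 p.2 + ε * p.2) (spaceTimeDomain s t) (x₀, t₀))
    (ht₀ : t₀ ∈ Icc 0 t) : IsMinOn (fun y => T y t₀) (Icc 0 (s t₀)) x₀ :=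
  isMinOn_iff.2 fun y hy => by
    have := isMinOn_iff.1 hmin (y, t₀) ⟨ht₀, hy⟩
    dsimp only at this ⊢
    linarith

theorem IsMinOn.isLocalMinOn_timeSlice
    (hmin : IsMinOn (fun p : ℝ × ℝ => T p.1 p.2 + ε * p.2) (spaceTimeDomain s t) (x₀, t₀))
    (ht₀ : t₀ ∈ Ioc 0 t) (hx₀ : x₀ ∈ Ico 0 (s t₀)) (hs : ContinuousAt s t₀) :
    IsLocalMinOn (fun τ => T x₀ τ + ε * τ) (Iic t₀) t₀ := by
  have hpos : ∀ᶠ τ in 𝓝[≤] t₀, 0 < τ :=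
    eventually_nhdsWithin_of_eventually_nhds (eventually_gt_nhds ht₀.1)
  have hxs : ∀ᶠ τ in 𝓝[≤] t₀, x₀ < s τ :=
    eventually_nhdsWithin_of_eventually_nhds (hs.eventually (eventually_gt_nhds hx₀.2))
  filter_upwards [hpos, hxs, self_mem_nhdsWithin] with τ hτ hxτ hτt
  exact isMinOn_iff.1 hmin (x₀, τ) ⟨⟨hτ.le, hτt.trans ht₀.2⟩, hx₀.1, hxτ.le⟩

theorem IsMinOn.deriv_spaceSlice_nonneg_of_left_end
    (hmin : IsMinOn (fun p : ℝ × ℝ => T p.1 p.2 + ε * p.2) (spaceTimeDomain s t) (0, t₀))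
    (ht₀ : t₀ ∈ Icc 0 t) (hs : 0 < s t₀) : 0 ≤ deriv (fun y => T y t₀) 0 :=
  IsLocalMinOn.deriv_nonneg_of_Ici <|
    (hmin.isMinOn_spaceSlice ht₀).localize.filter_mono (nhdsWithin_Icc_eq_nhdsGE hs).ge

theorem IsMinOn.deriv_time_lt_mul_deriv_deriv_space {α : ℝ}
    (hmin : IsMinOn (fun p : ℝ × ℝ => T p.1 p.2 + ε * p.2) (spaceTimeDomain s t) (x₀, t₀))
    (hε : 0 < ε) (hα : 0 ≤ α) (ht₀ : t₀ ∈ Ioc 0 t) (hx₀ : x₀ ∈ Ioo 0 (s t₀))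
    (hs : ContinuousAt s t₀) (hTt : DifferentiableAt ℝ (fun τ => T x₀ τ) t₀)
    (hTx : ContinuousAt (fun y => T y t₀) x₀) :
    deriv (fun τ => T x₀ τ) t₀ < α * deriv (deriv fun y => T y t₀) x₀ := by
  have hderiv : HasDerivAt (fun τ => T x₀ τ + ε * τ) (deriv (fun τ => T x₀ τ) t₀ + ε) t₀ :=
    hTt.hasDerivAt.add (by simpa using (hasDerivAt_id t₀).const_mul ε)
  have htime := (hmin.isLocalMinOn_timeSlice ht₀ ⟨hx₀.1.le, hx₀.2⟩ hs).deriv_nonpos_of_Iic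
  rw [hderiv.deriv] at htime
  have hspace := ((hmin.isMinOn_spaceSlice ⟨ht₀.1.le, ht₀.2⟩).isLocalMin
    (Icc_mem_nhds hx₀.1 hx₀.2)).deriv_deriv_nonneg hTx
  nlinarith [mul_nonneg hα hspace]

end Minimizer

theorem stefan_model_validity_general
    (α k Tm tbar : ℝ) (T : ℝ → ℝ → ℝ) (s qc : ℝ → ℝ)
    (hα : 0 < α) (hk : 0 < k)
    (hs_reg : ContDiffOn ℝ 1 s (Set.Icc 0 tbar))
    (hT_cont : ContinuousOn (fun p : ℝ × ℝ => T p.1 p.2)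
      {p : ℝ × ℝ | p.2 ∈ Set.Icc (0:ℝ) tbar ∧ p.1 ∈ Set.Icc 0 (s p.2)})
    (hT_xreg : ∀ t ∈ Set.Icc (0:ℝ) tbar, ContDiffOn ℝ 2 (fun x => T x t) (Set.Icc 0 (s t)))
    (hT_treg : ∀ t ∈ Set.Icc (0:ℝ) tbar, ∀ x ∈ Set.Icc (0:ℝ) (s t),
      DifferentiableAt ℝ (fun τ => T x τ) t)
    (hPDE : ∀ t ∈ Set.Icc (0:ℝ) tbar, ∀ x ∈ Set.Ioo (0:ℝ) (s t),
      deriv (fun τ => T x τ) t = α * deriv (deriv (fun y => T y t)) x)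
    (hBC : ∀ t ∈ Set.Icc (0:ℝ) tbar, -k * deriv (fun y => T y t) 0 = qc t)
    (hIF : ∀ t ∈ Set.Icc (0:ℝ) tbar, T (s t) t = Tm)
    (hq_pos : ∀ t ∈ Set.Ioo (0:ℝ) tbar, 0 < qc t)
    (hIC : ∀ x ∈ Set.Icc (0:ℝ) (s 0), Tm ≤ T x 0) :
    ∀ t ∈ Set.Ioo (0:ℝ) tbar, ∀ x ∈ Set.Icc (0:ℝ) (s t), Tm ≤ T x t := by
  intro t ht x hx
  have hsub : Icc 0 t ⊆ Icc 0 tbar := Icc_subset_Icc_right ht.2.le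
  have hxt : (x, t) ∈ spaceTimeDomain s t := ⟨⟨ht.1.le, le_rfl⟩, hx⟩
  refine le_of_forall_pos_le_add fun δ hδ => ?_
  have hε : 0 < δ / t := div_pos hδ ht.1
  obtain ⟨⟨x₀, t₀⟩, hp₀, hmin⟩ :=
    (isCompact_spaceTimeDomain (hs_reg.continuousOn.mono hsub)).exists_isMinOn ⟨_, hxt⟩
      (f := fun p : ℝ × ℝ => T p.1 p.2 + δ / t * p.2)
      ((hT_cont.mono fun p hp => ⟨hsub hp.1, hp.2⟩).add (by fun_prop))
  obtain ⟨ht₀, hx₀⟩ : t₀ ∈ Icc 0 t ∧ x₀ ∈ Icc 0 (s t₀) := hp₀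
  have hmin_ge : Tm ≤ T x₀ t₀ + δ / t * t₀ := by
    obtain rfl | ht₀pos := ht₀.1.eq_or_lt
    · simpa using hIC x₀ hx₀
    obtain hx₀s | hx₀s := hx₀.2.eq_or_lt
    · rw [hx₀s, hIF t₀ (hsub ht₀)]
      exact le_add_of_nonneg_right (mul_nonneg hε.le ht₀.1)
    exfalso
    have ht₀' : t₀ ∈ Ioo 0 tbar := ⟨ht₀pos, ht₀.2.trans_lt ht.2⟩
    obtain rfl | hx₀pos := hx₀.1.eq_or_lt
    · nlinarith [hmin.deriv_spaceSlice_nonneg_of_left_end ht₀ hx₀s, hBC t₀ (hsub ht₀),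
        hq_pos t₀ ht₀']
    · exact (hmin.deriv_time_lt_mul_deriv_deriv_space hε hα.le ⟨ht₀pos, ht₀.2⟩ ⟨hx₀pos, hx₀s⟩
        (hs_reg.continuousOn.continuousAt (Icc_mem_nhds ht₀'.1 ht₀'.2))
        (hT_treg t₀ (hsub ht₀) x₀ hx₀)
        ((hT_xreg t₀ (hsub ht₀)).continuousOn.continuousAt (Icc_mem_nhds hx₀pos hx₀s))).ne
        (hPDE t₀ (hsub ht₀) x₀ ⟨hx₀pos, hx₀s⟩)
  calc Tm ≤ T x₀ t₀ + δ / t * t₀ := hmin_ge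
    _ ≤ T x t + δ / t * t := isMinOn_iff.1 hmin _ hxt
    _ = T x t + δ := by rw [div_mul_cancel₀ _ ht.1.ne']

/-- If the heat-flux input is positive on a finite time interval and the
initial temperature is at or above the melting temperature, then the model-validity
condition `T(x,t) ≥ T_m` holds on the whole moving domain. -/
theorem stefan_model_validity
    (α β k Tm tbar : ℝ) (T : ℝ → ℝ → ℝ) (s qc : ℝ → ℝ)
    (hα : 0 < α) (hβ : 0 < β) (hk : 0 < k) (htbar : 0 < tbar)
    (hs_pos : ∀ t ∈ Set.Icc (0:ℝ) tbar, 0 < s t)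
    (hs_reg : ContDiffOn ℝ 1 s (Set.Icc 0 tbar))
    (hT_cont : ContinuousOn (fun p : ℝ × ℝ => T p.1 p.2)
      {p : ℝ × ℝ | p.2 ∈ Set.Icc (0:ℝ) tbar ∧ p.1 ∈ Set.Icc 0 (s p.2)})
    (hT_xreg : ∀ t ∈ Set.Icc (0:ℝ) tbar, ContDiffOn ℝ 2 (fun x => T x t) (Set.Icc 0 (s t)))
    (hT_treg : ∀ t ∈ Set.Icc (0:ℝ) tbar, ∀ x ∈ Set.Icc (0:ℝ) (s t),
      DifferentiableAt ℝ (fun τ => T x τ) t)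
    (hPDE : ∀ t ∈ Set.Icc (0:ℝ) tbar, ∀ x ∈ Set.Ioo (0:ℝ) (s t),
      deriv (fun τ => T x τ) t = α * deriv (deriv (fun y => T y t)) x)
    (hBC : ∀ t ∈ Set.Icc (0:ℝ) tbar, -k * deriv (fun y => T y t) 0 = qc t)
    (hIF : ∀ t ∈ Set.Icc (0:ℝ) tbar, T (s t) t = Tm)
    (hStefan : ∀ t ∈ Set.Icc (0:ℝ) tbar, deriv s t = -β * deriv (fun y => T y t) (s t))
    (hq_pos : ∀ t ∈ Set.Ioo (0:ℝ) tbar, 0 < qc t)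
    (hIC : ∀ x ∈ Set.Icc (0:ℝ) (s 0), Tm ≤ T x 0) :
    ∀ t ∈ Set.Ioo (0:ℝ) tbar, ∀ x ∈ Set.Icc (0:ℝ) (s t), Tm ≤ T x t :=
  stefan_model_validity_general α k Tm tbar T s qc hα hk hs_reg hT_cont hT_xreg hT_treg hPDE hBC hIF
    hq_pos hIC
end

section
/- Let V, s : [0,∞) → ℝ be differentiable functions with V(t) ≥ 0, ṡ(t) ≥ 0, and 0 ≤ s(t) ≤ s_r for all t ≥ 0, and let a, b > 0 be constants such that V̇(t) ≤ −b V(t) + a ṡ(t) V(t) for all t ≥ 0. Then V(t) ≤ e^{a s_r} V(0) e^{−b t} for all t ≥ 0. -/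
/-!
The integrating factor `exp (b t - a s t)` turns the differential inequality into the statement
that `V t * exp (b t - a s t)` is nonincreasing. Comparing its value at `t` with its value at `0`
gives `V t ≤ V 0 * exp (a (s t - s 0)) * exp (-b t)`, and `0 ≤ s 0`, `s t ≤ s_r` bound the
middle factor by `exp (a s_r)`.
-/

open Set Real

section IntegratingFactor

variable {D : Set ℝ} {V V' φ φ' : ℝ → ℝ}

theorem antitoneOn_mul_exp_neg_of_deriv_le_mul (hD : Convex ℝ D)
    (hV : ∀ t ∈ D, HasDerivAt V (V' t) t) (hφ : ∀ t ∈ D, HasDerivAt φ (φ' t) t)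
    (hle : ∀ t ∈ D, V' t ≤ φ' t * V t) :
    AntitoneOn (fun t => V t * exp (-φ t)) D := by
  have hderiv : ∀ t ∈ D, HasDerivAt (fun t => V t * exp (-φ t))
      ((V' t - φ' t * V t) * exp (-φ t)) t := fun t ht => by
    refine ((hV t ht).mul (hφ t ht).neg.exp).congr_deriv ?_
    simp only [Pi.neg_apply]
    ring
  exact antitoneOn_of_hasDerivWithinAt_nonpos hD
    (fun t ht => (hderiv t ht).continuousAt.continuousWithinAt)
    (fun t ht => (hderiv t (interior_subset ht)).hasDerivWithinAt) fun t ht =>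
    mul_nonpos_of_nonpos_of_nonneg (sub_nonpos.2 (hle t (interior_subset ht))) (exp_pos _).le

theorem le_mul_exp_sub_of_deriv_le_mul (hD : Convex ℝ D)
    (hV : ∀ t ∈ D, HasDerivAt V (V' t) t) (hφ : ∀ t ∈ D, HasDerivAt φ (φ' t) t)
    (hle : ∀ t ∈ D, V' t ≤ φ' t * V t) {t₀ t : ℝ} (ht₀ : t₀ ∈ D) (ht : t ∈ D) (hlt : t₀ ≤ t) :
    V t ≤ V t₀ * exp (φ t - φ t₀) := by
  have hanti := antitoneOn_mul_exp_neg_of_deriv_le_mul hD hV hφ hle ht₀ ht hlt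
  calc V t = V t * exp (-φ t) * exp (φ t) := by rw [mul_assoc, ← exp_add]; simp
    _ ≤ V t₀ * exp (-φ t₀) * exp (φ t) := by gcongr
    _ = V t₀ * exp (φ t - φ t₀) := by rw [mul_assoc, ← exp_add]; ring_nf

end IntegratingFactor

theorem lyapunov_moving_boundary_gronwall_general
    (V s : ℝ → ℝ) (a b s_r : ℝ)
    (ha : 0 < a)
    (hV_diff : ∀ t ≥ (0:ℝ), DifferentiableAt ℝ V t)
    (hs_diff : ∀ t ≥ (0:ℝ), DifferentiableAt ℝ s t)
    (hV_nonneg : ∀ t ≥ (0:ℝ), 0 ≤ V t)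
    (hs_bound : ∀ t ≥ (0:ℝ), 0 ≤ s t ∧ s t ≤ s_r)
    (hineq : ∀ t ≥ (0:ℝ), deriv V t ≤ -b * V t + a * deriv s t * V t) :
    ∀ t ≥ (0:ℝ), V t ≤ Real.exp (a * s_r) * V 0 * Real.exp (-b * t) := by
  intro t ht
  have hφ : ∀ τ ∈ Ici (0:ℝ), HasDerivAt (fun τ => a * s τ - b * τ) (a * deriv s τ - b) τ :=
    fun τ hτ => (((hs_diff τ hτ).hasDerivAt.const_mul a).sub
      ((hasDerivAt_id' τ).const_mul b)).congr_deriv (by ring)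
  have hV_le := le_mul_exp_sub_of_deriv_le_mul (convex_Ici 0)
    (fun τ hτ => (hV_diff τ hτ).hasDerivAt) hφ
    (fun τ hτ => by linarith [hineq τ hτ]) self_mem_Ici ht ht
  have hexp_le : a * s t - b * t - (a * s 0 - b * 0) ≤ a * s_r + -b * t := by
    nlinarith [hs_bound t ht, hs_bound 0 le_rfl]
  calc V t ≤ V 0 * exp (a * s t - b * t - (a * s 0 - b * 0)) := hV_le
    _ ≤ V 0 * exp (a * s_r + -b * t) := by gcongr; exact hV_nonneg 0 le_rfl
    _ = Real.exp (a * s_r) * V 0 * Real.exp (-b * t) := by rw [exp_add]; ring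

/-- Gronwall-type estimate: if `V̇ ≤ −b V + a ṡ V` with `V ≥ 0`, `ṡ ≥ 0`
and `0 ≤ s ≤ s_r`, then `V(t) ≤ e^{a s_r} V(0) e^{−b t}`. -/
theorem lyapunov_moving_boundary_gronwall
    (V s : ℝ → ℝ) (a b s_r : ℝ)
    (ha : 0 < a) (hb : 0 < b) (hsr : 0 < s_r)
    (hV_diff : ∀ t ≥ (0:ℝ), DifferentiableAt ℝ V t)
    (hs_diff : ∀ t ≥ (0:ℝ), DifferentiableAt ℝ s t)
    (hV_nonneg : ∀ t ≥ (0:ℝ), 0 ≤ V t)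
    (hs_mono : ∀ t ≥ (0:ℝ), 0 ≤ deriv s t)
    (hs_bound : ∀ t ≥ (0:ℝ), 0 ≤ s t ∧ s t ≤ s_r)
    (hineq : ∀ t ≥ (0:ℝ), deriv V t ≤ -b * V t + a * deriv s t * V t) :
    ∀ t ≥ (0:ℝ), V t ≤ Real.exp (a * s_r) * V 0 * Real.exp (-b * t) :=
  lyapunov_moving_boundary_gronwall_general V s a b s_r ha hV_diff hs_diff hV_nonneg hs_bound hineq
end

section
/- Fix c, α, β > 0, s_r > 0, p > 0, and let 0 < s ≤ s_r. For continuously differentiable functions u, w : [0, s] → ℝ and X ∈ ℝ related by the backstepping transformation w(x) = u(x) − (c/α)∫_x^{s} (x − y) u(y) dy − (c/β)(x − s) X, there exist constants δ̲ > 0 and δ̄ > 0, depending only on c, α, β, s_r and p (not on s, u, w, X), such that δ̲ ( ∫₀^{s} u(x)² dx + ∫₀^{s} u'(x)² dx + X² ) ≤ ∫₀^{s} w(x)² dx + ∫₀^{s} w'(x)² dx + p X² ≤ δ̄ ( ∫₀^{s} u(x)² dx + ∫₀^{s} u'(x)² dx + X² ). -/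
/-!
With `A = c/α` and `B = c/β`, the upper bound is Cauchy–Schwarz applied to
`w = u - A ∫ₓˢ (x - y) u - B (x - s) X` and to its derivative `w' = u' - A ∫ₓˢ u - B X`.
For the lower bound, solve the transformation for `u`: squaring gives
`u(x)² ≤ 3 (w(x)² + B² s² X²) + 3 A² s³ ∫ₓˢ u²`, and a backward Gronwall inequality bounds
`∫₀ˢ u²` by `e^{3A²s⁴}` times the integral of the forcing term; `u'` is then controlled through
the derivative relation. All constants obtained are increasing in `s`, so evaluating them at
`s_r` makes them uniform in `s ∈ (0, s_r]`.
-/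

open Set Real Topology intervalIntegral
open MeasureTheory (volume)

theorem sq_intervalIntegral_le {f : ℝ → ℝ} {a b : ℝ} (hab : a ≤ b)
    (hf : IntervalIntegrable f volume a b)
    (hf2 : IntervalIntegrable (fun x => f x ^ 2) volume a b) :
    (∫ x in a..b, f x) ^ 2 ≤ (b - a) * ∫ x in a..b, f x ^ 2 := by
  have hquad : ∀ t : ℝ,
      0 ≤ (b - a) * (t * t) + (-2 * ∫ x in a..b, f x) * t + ∫ x in a..b, f x ^ 2 := by
    intro t
    have hexp : ∫ x in a..b, (f x - t) ^ 2 =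
        (b - a) * (t * t) + (-2 * ∫ x in a..b, f x) * t + ∫ x in a..b, f x ^ 2 := by
      simp only [sub_sq]
      rw [integral_add (hf2.sub (hf.const_mul 2 |>.mul_const t)) intervalIntegrable_const,
        integral_sub hf2 ((hf.const_mul 2).mul_const t), intervalIntegral.integral_mul_const,
        intervalIntegral.integral_const_mul, integral_const, smul_eq_mul]
      ring
    exact hexp ▸ integral_nonneg hab fun x _ => sq_nonneg _
  have := discrim_le_zero hquad
  rw [discrim] at this
  linarith

theorem integral_le_exp_mul_integral_of_le_add_integral {f g : ℝ → ℝ} {a b L : ℝ}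
    (hab : a ≤ b) (hL : 0 ≤ L) (hf : Continuous f) (hg : Continuous g)
    (hg0 : ∀ x ∈ Icc a b, 0 ≤ g x) (hfg : ∀ x ∈ Icc a b, f x ≤ g x + L * ∫ y in x..b, f y) :
    ∫ x in a..b, f x ≤ exp (L * (b - a)) * ∫ x in a..b, g x := by
  -- `F a = ∫ₐᵇ f` and `F b = e^{L(b-a)} ∫ₐᵇ g`, and `F' ≥ 0` on `[a, b]` by `hfg`.
  set F : ℝ → ℝ := fun x => exp (L * (x - a)) * (∫ y in x..b, f y) +
    exp (L * (b - a)) * ∫ y in a..x, g y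
  have hF : ∀ x, HasDerivAt F (exp (L * (x - a)) * (L * (∫ y in x..b, f y) - f x) +
      exp (L * (b - a)) * g x) x := by
    intro x
    have hexp : HasDerivAt (fun x => exp (L * (x - a))) (exp (L * (x - a)) * L) x := by
      simpa using ((hasDerivAt_id x).sub_const a |>.const_mul L).exp
    have hV := integral_hasDerivAt_left (hf.intervalIntegrable x b)
      (hf.stronglyMeasurableAtFilter _ _) hf.continuousAt
    have hG := integral_hasDerivAt_right (hg.intervalIntegrable a x)
      (hg.stronglyMeasurableAtFilter _ _) hg.continuousAt
    exact ((hexp.mul hV).add (hG.const_mul (exp (L * (b - a))))).congr_deriv (by ring)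
  have hmono : MonotoneOn F (Icc a b) := by
    refine monotoneOn_of_hasDerivWithinAt_nonneg (convex_Icc a b)
      (continuous_iff_continuousAt.2 fun x => (hF x).continuousAt).continuousOn
      (fun x _ => (hF x).hasDerivWithinAt) ?_
    rw [interior_Icc]
    intro x hx
    have hx' := Ioo_subset_Icc_self hx
    have hexp_le : exp (L * (x - a)) ≤ exp (L * (b - a)) := by
      gcongr; exact hx.2.le
    nlinarith [mul_le_mul_of_nonneg_left (hfg x hx') (exp_pos (L * (x - a))).le,
      mul_le_mul_of_nonneg_right hexp_le (hg0 x hx')]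
  simpa [F] using hmono (left_mem_Icc.2 hab) (right_mem_Icc.2 hab) hab

theorem hasDerivAt_integral_sub_mul {f : ℝ → ℝ} (hf : Continuous f) (b x : ℝ) :
    HasDerivAt (fun t => ∫ y in t..b, (t - y) * f y) (∫ y in x..b, f y) x := by
  have hyf : Continuous fun y => y * f y := continuous_id.mul hf
  have hsplit : (fun t => ∫ y in t..b, (t - y) * f y) =
      fun t => t * (∫ y in t..b, f y) - ∫ y in t..b, y * f y := by
    funext t
    simp only [sub_mul]
    rw [integral_sub ((hf.const_mul t).intervalIntegrable _ _) (hyf.intervalIntegrable _ _),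
      intervalIntegral.integral_const_mul]
  rw [hsplit]
  exact ((hasDerivAt_id x).mul (integral_hasDerivAt_left (hf.intervalIntegrable x b)
    (hf.stronglyMeasurableAtFilter _ _) hf.continuousAt)).sub
    (integral_hasDerivAt_left (hyf.intervalIntegrable x b) (hyf.stronglyMeasurableAtFilter _ _)
      hyf.continuousAt) |>.congr_deriv (by simp)

theorem sq_integral_sub_mul_le {f : ℝ → ℝ} {x b : ℝ} (hf : Continuous f) (hxb : x ≤ b) :
    (∫ y in x..b, (x - y) * f y) ^ 2 ≤ (b - x) ^ 3 * ∫ y in x..b, f y ^ 2 := by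
  have hk : Continuous fun y => (x - y) * f y := (continuous_const.sub continuous_id).mul hf
  calc (∫ y in x..b, (x - y) * f y) ^ 2
      ≤ (b - x) * ∫ y in x..b, ((x - y) * f y) ^ 2 :=
        sq_intervalIntegral_le hxb (hk.intervalIntegrable _ _) ((hk.pow 2).intervalIntegrable _ _)
    _ ≤ (b - x) * ∫ y in x..b, (b - x) ^ 2 * f y ^ 2 := by
        gcongr
        refine integral_mono_on hxb ((hk.pow 2).intervalIntegrable _ _)
          ((continuous_const.mul (hf.pow 2)).intervalIntegrable _ _) fun y hy => ?_
        rw [mul_pow]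
        exact mul_le_mul_of_nonneg_right (sq_le_sq' (by linarith [hy.2]) (by linarith [hy.1]))
          (sq_nonneg _)
    _ = (b - x) ^ 3 * ∫ y in x..b, f y ^ 2 := by
        rw [intervalIntegral.integral_const_mul]; ring

theorem intervalIntegral_sq_le_of_mem_Icc {f : ℝ → ℝ} {x s : ℝ} (hf : Continuous f)
    (hx : x ∈ Icc 0 s) : ∫ y in x..s, f y ^ 2 ≤ ∫ y in (0:ℝ)..s, f y ^ 2 :=
  integral_mono_interval hx.1 hx.2 le_rfl (Filter.Eventually.of_forall fun _ => sq_nonneg _)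
    ((hf.pow 2).intervalIntegrable _ _)

theorem sq_integral_tail_le {f : ℝ → ℝ} {x s : ℝ} (hf : Continuous f) (hx : x ∈ Icc 0 s) :
    (∫ y in x..s, f y) ^ 2 ≤ s * ∫ y in (0:ℝ)..s, f y ^ 2 :=
  (sq_intervalIntegral_le hx.2 (hf.intervalIntegrable _ _)
    ((hf.pow 2).intervalIntegrable _ _)).trans
    (mul_le_mul (by linarith [hx.1]) (intervalIntegral_sq_le_of_mem_Icc hf hx)
      (integral_nonneg hx.2 fun _ _ => sq_nonneg _) (hx.1.trans hx.2))

theorem sq_integral_kernel_le {f : ℝ → ℝ} {x s : ℝ} (hf : Continuous f) (hx : x ∈ Icc 0 s) :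
    (∫ y in x..s, (x - y) * f y) ^ 2 ≤ s ^ 3 * ∫ y in x..s, f y ^ 2 :=
  (sq_integral_sub_mul_le hf hx.2).trans (mul_le_mul_of_nonneg_right
    (pow_le_pow_left₀ (by linarith [hx.2]) (by linarith [hx.1]) 3)
    (integral_nonneg hx.2 fun _ _ => sq_nonneg _))

theorem integral_le_mul_integral_add {f g : ℝ → ℝ} {a b k C : ℝ} (hab : a ≤ b)
    (hf : Continuous f) (hg : Continuous g) (hfg : ∀ x ∈ Ioo a b, g x ≤ k * f x + C) :
    ∫ x in a..b, g x ≤ k * (∫ x in a..b, f x) + (b - a) * C := by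
  have hkf : Continuous fun x => k * f x := continuous_const.mul hf
  calc ∫ x in a..b, g x ≤ ∫ x in a..b, (k * f x + C) :=
        integral_mono_on_of_le_Ioo hab (hg.intervalIntegrable _ _)
          ((hkf.add continuous_const).intervalIntegrable _ _) hfg
    _ = k * (∫ x in a..b, f x) + (b - a) * C := by
        rw [integral_add (hkf.intervalIntegrable _ _) intervalIntegrable_const,
          intervalIntegral.integral_const_mul, intervalIntegral.integral_const, smul_eq_mul]

theorem ContinuousOn.exists_continuous_eqOn_Icc {β : Type*} [TopologicalSpace β] {f : ℝ → β}
    {a b : ℝ} (hab : a ≤ b) (hf : ContinuousOn f (Icc a b)) :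
    ∃ F : ℝ → β, Continuous F ∧ EqOn f F (Icc a b) :=
  ⟨IccExtend hab ((Icc a b).domRestrict f),
    (continuousOn_iff_continuous_domRestrict.1 hf).Icc_extend',
    fun x hx => by rw [IccExtend_of_mem hab _ hx]; rfl⟩

theorem ContDiffOn.exists_continuous_hasDerivAt_Ioo {f : ℝ → ℝ} {a b : ℝ} (hab : a < b)
    (hf : ContDiffOn ℝ 1 f (Icc a b)) :
    ∃ F F' : ℝ → ℝ, Continuous F ∧ Continuous F' ∧ EqOn f F (Icc a b) ∧
      EqOn (deriv f) F' (Ioo a b) ∧ ∀ x ∈ Ioo a b, HasDerivAt F (F' x) x := by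
  obtain ⟨F, hF, hfF⟩ := hf.continuousOn.exists_continuous_eqOn_Icc hab.le
  obtain ⟨F', hF', hfF'⟩ := (hf.continuousOn_derivWithin (uniqueDiffOn_Icc hab) le_rfl)
    |>.exists_continuous_eqOn_Icc hab.le
  have hderiv : ∀ x ∈ Ioo a b, HasDerivAt f (F' x) x := by
    intro x hx
    have hnhds : Icc a b ∈ 𝓝 x := Icc_mem_nhds hx.1 hx.2
    rw [← hfF' (Ioo_subset_Icc_self hx), derivWithin_of_mem_nhds hnhds]
    exact ((hf.differentiableOn one_ne_zero x (Ioo_subset_Icc_self hx)).differentiableAt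
      hnhds).hasDerivAt
  refine ⟨F, F', hF, hF', hfF, fun x hx => (hderiv x hx).deriv, fun x hx => ?_⟩
  exact (hderiv x hx).congr_of_eventuallyEq
    (Filter.eventuallyEq_of_mem (Icc_mem_nhds hx.1 hx.2) fun y hy => (hfF hy).symm)

theorem add_add_sq_le (a b c : ℝ) : (a + b + c) ^ 2 ≤ 3 * (a ^ 2 + b ^ 2 + c ^ 2) := by
  nlinarith [sq_nonneg (a - b), sq_nonneg (a - c), sq_nonneg (b - c)]

theorem mul_add_add_le {a b c C S T Y : ℝ} (ha : a ≤ C) (hb : b ≤ C) (hc : c ≤ C)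
    (hS : 0 ≤ S) (hT : 0 ≤ T) (hY : 0 ≤ Y) : a * S + b * T + c * Y ≤ C * (S + T + Y) := by
  nlinarith [mul_le_mul_of_nonneg_right ha hS, mul_le_mul_of_nonneg_right hb hT,
    mul_le_mul_of_nonneg_right hc hY]

theorem min_one_mul_add_le {E Y p : ℝ} (hE : 0 ≤ E) (hY : 0 ≤ Y) :
    min 1 p * (E + Y) ≤ E + p * Y := by
  nlinarith [mul_le_mul_of_nonneg_right (min_le_left 1 p) hE,
    mul_le_mul_of_nonneg_right (min_le_right 1 p) hY]

theorem add_mul_le_max_one_mul {E Y p : ℝ} (hE : 0 ≤ E) (hY : 0 ≤ Y) :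
    E + p * Y ≤ max 1 p * (E + Y) := by
  nlinarith [mul_le_mul_of_nonneg_right (le_max_left 1 p) hE,
    mul_le_mul_of_nonneg_right (le_max_right 1 p) hY]

namespace Backstepping

noncomputable def upperConst (A B s : ℝ) : ℝ :=
  4 + 3 * A ^ 2 * (s ^ 2 + s ^ 4) + 3 * B ^ 2 * (s + s ^ 3)

noncomputable def lowerConst (A B s : ℝ) : ℝ :=
  3 * (1 + 3 * A ^ 2 * s ^ 2) * (1 + B ^ 2 * s ^ 3) * exp (3 * A ^ 2 * s ^ 4) + 3 * B ^ 2 * s + 4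

variable {A B s X : ℝ} {u w u' w' : ℝ → ℝ}

theorem upperConst_pos (hs : 0 ≤ s) : 0 < upperConst A B s := by
  have := pow_nonneg hs 3
  unfold upperConst; positivity

theorem lowerConst_pos (hs : 0 ≤ s) : 0 < lowerConst A B s := by
  have := pow_nonneg hs 3
  unfold lowerConst; positivity

theorem upperConst_mono {r : ℝ} (hs : 0 ≤ s) (hsr : s ≤ r) :
    upperConst A B s ≤ upperConst A B r := by
  unfold upperConst; gcongr

theorem lowerConst_mono {r : ℝ} (hs : 0 ≤ s) (hsr : s ≤ r) :
    lowerConst A B s ≤ lowerConst A B r := by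
  have hr3 := pow_nonneg (hs.trans hsr) 3
  unfold lowerConst; gcongr

theorem deriv_eq (hu : Continuous u)
    (hrel : ∀ x ∈ Icc 0 s, w x = u x - A * (∫ y in x..s, (x - y) * u y) - B * (x - s) * X)
    {x : ℝ} (hx : x ∈ Ioo 0 s) (hu' : HasDerivAt u (u' x) x) (hw' : HasDerivAt w (w' x) x) :
    w' x = u' x - A * (∫ y in x..s, u y) - B * X := by
  have hrhs : HasDerivAt (fun t => u t - A * (∫ y in t..s, (t - y) * u y) - B * (t - s) * X)
      (u' x - A * (∫ y in x..s, u y) - B * X) x :=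
    ((hu'.sub ((hasDerivAt_integral_sub_mul hu s x).const_mul A)).sub
      (((hasDerivAt_id x).sub_const s).const_mul B |>.mul_const X)).congr_deriv (by simp)
  exact hw'.unique (hrhs.congr_of_eventuallyEq
    (Filter.eventuallyEq_of_mem (Icc_mem_nhds hx.1 hx.2) hrel))

theorem energy_le_upperConst_mul (hs : 0 ≤ s) (hu : Continuous u) (hu' : Continuous u')
    (hw : Continuous w) (hw' : Continuous w')
    (hrel : ∀ x ∈ Icc 0 s, w x = u x - A * (∫ y in x..s, (x - y) * u y) - B * (x - s) * X)
    (hrel' : ∀ x ∈ Ioo 0 s, w' x = u' x - A * (∫ y in x..s, u y) - B * X) :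
    (∫ x in (0:ℝ)..s, w x ^ 2) + (∫ x in (0:ℝ)..s, w' x ^ 2) + X ^ 2 ≤
      upperConst A B s * ((∫ x in (0:ℝ)..s, u x ^ 2) + (∫ x in (0:ℝ)..s, u' x ^ 2) + X ^ 2) := by
  set S := ∫ x in (0:ℝ)..s, u x ^ 2
  have hS : 0 ≤ S := integral_nonneg hs fun _ _ => sq_nonneg _
  have hw_sq : ∀ x ∈ Ioo 0 s,
      w x ^ 2 ≤ 3 * u x ^ 2 + 3 * (A ^ 2 * s ^ 3 * S + B ^ 2 * s ^ 2 * X ^ 2) := by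
    intro x hx
    have hx' := Ioo_subset_Icc_self hx
    have hxs : (x - s) ^ 2 ≤ s ^ 2 := sq_le_sq' (by linarith [hx.1]) (by linarith [hx.2])
    have hker := (sq_integral_kernel_le hu hx').trans
      (mul_le_mul_of_nonneg_left (intervalIntegral_sq_le_of_mem_Icc hu hx') (pow_nonneg hs 3))
    rw [hrel x hx']
    nlinarith [add_add_sq_le (u x) (-(A * ∫ y in x..s, (x - y) * u y)) (-(B * (x - s) * X)),
      mul_le_mul_of_nonneg_left hker (sq_nonneg A),
      mul_le_mul_of_nonneg_left hxs (mul_nonneg (sq_nonneg B) (sq_nonneg X))]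
  have hw'_sq : ∀ x ∈ Ioo 0 s,
      w' x ^ 2 ≤ 3 * u' x ^ 2 + 3 * (A ^ 2 * s * S + B ^ 2 * X ^ 2) := by
    intro x hx
    rw [hrel' x hx]
    nlinarith [add_add_sq_le (u' x) (-(A * ∫ y in x..s, u y)) (-(B * X)),
      mul_le_mul_of_nonneg_left (sq_integral_tail_le hu (Ioo_subset_Icc_self hx)) (sq_nonneg A)]
  have hW := integral_le_mul_integral_add hs (by fun_prop) (by fun_prop) hw_sq
  have hW' := integral_le_mul_integral_add hs (by fun_prop) (by fun_prop) hw'_sq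
  have hA : 0 ≤ 3 * A ^ 2 * (s ^ 2 + s ^ 4) := by positivity
  have hB : 0 ≤ 3 * B ^ 2 * (s + s ^ 3) := by have := pow_nonneg hs 3; positivity
  calc (∫ x in (0:ℝ)..s, w x ^ 2) + (∫ x in (0:ℝ)..s, w' x ^ 2) + X ^ 2
      ≤ (3 + 3 * A ^ 2 * (s ^ 2 + s ^ 4)) * S + 3 * (∫ x in (0:ℝ)..s, u' x ^ 2) +
          (1 + 3 * B ^ 2 * (s + s ^ 3)) * X ^ 2 := by
        linear_combination hW + hW'
    _ ≤ _ := by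
        unfold upperConst
        exact mul_add_add_le (by linarith) (by linarith) (by linarith) hS
          (integral_nonneg hs fun _ _ => sq_nonneg _) (sq_nonneg X)

theorem integral_sq_le_exp_mul (hs : 0 ≤ s) (hu : Continuous u) (hw : Continuous w)
    (hrel : ∀ x ∈ Icc 0 s, w x = u x - A * (∫ y in x..s, (x - y) * u y) - B * (x - s) * X) :
    ∫ x in (0:ℝ)..s, u x ^ 2 ≤
      exp (3 * A ^ 2 * s ^ 4) * (3 * (∫ x in (0:ℝ)..s, w x ^ 2) + 3 * B ^ 2 * s ^ 3 * X ^ 2) := by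
  have hu_sq : ∀ x ∈ Icc 0 s, u x ^ 2 ≤
      (3 * w x ^ 2 + 3 * B ^ 2 * s ^ 2 * X ^ 2) + 3 * A ^ 2 * s ^ 3 * ∫ y in x..s, u y ^ 2 := by
    intro x hx
    have hxs : (x - s) ^ 2 ≤ s ^ 2 := sq_le_sq' (by linarith [hx.1]) (by linarith [hx.2])
    have hux : u x = w x + A * (∫ y in x..s, (x - y) * u y) + B * (x - s) * X := by
      rw [hrel x hx]; ring
    rw [hux]
    nlinarith [add_add_sq_le (w x) (A * ∫ y in x..s, (x - y) * u y) (B * (x - s) * X),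
      mul_le_mul_of_nonneg_left (sq_integral_kernel_le hu hx) (sq_nonneg A),
      mul_le_mul_of_nonneg_left hxs (mul_nonneg (sq_nonneg B) (sq_nonneg X))]
  have hforcing : ∫ x in (0:ℝ)..s, (3 * w x ^ 2 + 3 * B ^ 2 * s ^ 2 * X ^ 2) =
      3 * (∫ x in (0:ℝ)..s, w x ^ 2) + 3 * B ^ 2 * s ^ 3 * X ^ 2 := by
    rw [integral_add ((by fun_prop : Continuous fun x => 3 * w x ^ 2).intervalIntegrable _ _)
      intervalIntegrable_const, intervalIntegral.integral_const_mul,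
      intervalIntegral.integral_const, smul_eq_mul]
    ring
  have h := integral_le_exp_mul_integral_of_le_add_integral hs (by positivity) (by fun_prop)
    (by fun_prop) (fun x _ => by positivity) hu_sq
  rwa [hforcing, show 3 * A ^ 2 * s ^ 3 * (s - 0) = 3 * A ^ 2 * s ^ 4 by ring] at h

theorem energy_le_lowerConst_mul (hs : 0 ≤ s) (hu : Continuous u) (hu' : Continuous u')
    (hw : Continuous w) (hw' : Continuous w')
    (hrel : ∀ x ∈ Icc 0 s, w x = u x - A * (∫ y in x..s, (x - y) * u y) - B * (x - s) * X)
    (hrel' : ∀ x ∈ Ioo 0 s, w' x = u' x - A * (∫ y in x..s, u y) - B * X) :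
    (∫ x in (0:ℝ)..s, u x ^ 2) + (∫ x in (0:ℝ)..s, u' x ^ 2) + X ^ 2 ≤
      lowerConst A B s * ((∫ x in (0:ℝ)..s, w x ^ 2) + (∫ x in (0:ℝ)..s, w' x ^ 2) + X ^ 2) := by
  set S := ∫ x in (0:ℝ)..s, u x ^ 2
  set T := ∫ x in (0:ℝ)..s, w x ^ 2
  set T' := ∫ x in (0:ℝ)..s, w' x ^ 2
  have hT : 0 ≤ T := integral_nonneg hs fun _ _ => sq_nonneg _
  have hT' : 0 ≤ T' := integral_nonneg hs fun _ _ => sq_nonneg _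
  have hu'_sq : ∀ x ∈ Ioo 0 s,
      u' x ^ 2 ≤ 3 * w' x ^ 2 + 3 * (A ^ 2 * s * S + B ^ 2 * X ^ 2) := by
    intro x hx
    have hux' : u' x = w' x + A * (∫ y in x..s, u y) + B * X := by
      rw [hrel' x hx]; ring
    rw [hux']
    nlinarith [add_add_sq_le (w' x) (A * ∫ y in x..s, u y) (B * X),
      mul_le_mul_of_nonneg_left (sq_integral_tail_le hu (Ioo_subset_Icc_self hx)) (sq_nonneg A)]
  have hU' := integral_le_mul_integral_add hs (by fun_prop) (by fun_prop) hu'_sq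
  set e := exp (3 * A ^ 2 * s ^ 4)
  have ha : 0 ≤ 3 * (1 + 3 * A ^ 2 * s ^ 2) * e := by positivity
  have hB : 0 ≤ B ^ 2 * s ^ 3 := by have := pow_nonneg hs 3; positivity
  calc S + (∫ x in (0:ℝ)..s, u' x ^ 2) + X ^ 2
      ≤ (1 + 3 * A ^ 2 * s ^ 2) * S + 3 * T' + (1 + 3 * B ^ 2 * s) * X ^ 2 := by
        linear_combination hU'
    _ ≤ (1 + 3 * A ^ 2 * s ^ 2) * (e * (3 * T + 3 * B ^ 2 * s ^ 3 * X ^ 2)) + 3 * T' +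
          (1 + 3 * B ^ 2 * s) * X ^ 2 := by
        gcongr
        exact integral_sq_le_exp_mul hs hu hw hrel
    _ = 3 * (1 + 3 * A ^ 2 * s ^ 2) * e * T + 3 * T' +
          (3 * (1 + 3 * A ^ 2 * s ^ 2) * e * (B ^ 2 * s ^ 3) + 1 + 3 * B ^ 2 * s) * X ^ 2 := by
        ring
    _ ≤ _ := by
        have hBs : 0 ≤ 3 * B ^ 2 * s := by positivity
        unfold lowerConst
        exact mul_add_add_le (by nlinarith [mul_nonneg ha hB]) (by nlinarith [mul_nonneg ha hB])
          (by nlinarith) hT hT' (sq_nonneg X)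

theorem energy_bounds {u w : ℝ → ℝ} (hs : 0 < s)
    (hu : ContDiffOn ℝ 1 u (Icc 0 s)) (hw : ContDiffOn ℝ 1 w (Icc 0 s))
    (hrel : ∀ x ∈ Icc 0 s, w x = u x - A * (∫ y in x..s, (x - y) * u y) - B * (x - s) * X) :
    (∫ x in (0:ℝ)..s, u x ^ 2) + (∫ x in (0:ℝ)..s, deriv u x ^ 2) + X ^ 2 ≤
        lowerConst A B s *
          ((∫ x in (0:ℝ)..s, w x ^ 2) + (∫ x in (0:ℝ)..s, deriv w x ^ 2) + X ^ 2) ∧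
      (∫ x in (0:ℝ)..s, w x ^ 2) + (∫ x in (0:ℝ)..s, deriv w x ^ 2) + X ^ 2 ≤
        upperConst A B s *
          ((∫ x in (0:ℝ)..s, u x ^ 2) + (∫ x in (0:ℝ)..s, deriv u x ^ 2) + X ^ 2) := by
  obtain ⟨U, U', hU, hU', huU, hdu, hUd⟩ := hu.exists_continuous_hasDerivAt_Ioo hs
  obtain ⟨W, W', hW, hW', hwW, hdw, hWd⟩ := hw.exists_continuous_hasDerivAt_Ioo hs
  have hrelU : ∀ x ∈ Icc 0 s,
      W x = U x - A * (∫ y in x..s, (x - y) * U y) - B * (x - s) * X := by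
    intro x hx
    rw [← hwW hx, ← huU hx, hrel x hx, integral_congr fun y hy => ?_]
    rw [uIcc_of_le hx.2] at hy
    rw [huU ⟨hx.1.trans hy.1, hy.2⟩]
  have hrelU' : ∀ x ∈ Ioo 0 s, W' x = U' x - A * (∫ y in x..s, U y) - B * X :=
    fun x hx => deriv_eq hU hrelU hx (hUd x hx) (hWd x hx)
  have hsq : ∀ {f F : ℝ → ℝ}, EqOn f F (Icc 0 s) →
      ∫ x in (0:ℝ)..s, f x ^ 2 = ∫ x in (0:ℝ)..s, F x ^ 2 :=
    fun hfF => integral_congr fun x hx => by rw [hfF (uIcc_of_le hs.le ▸ hx)]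
  have hsq' : ∀ {f F : ℝ → ℝ}, EqOn f F (Ioo 0 s) →
      ∫ x in (0:ℝ)..s, f x ^ 2 = ∫ x in (0:ℝ)..s, F x ^ 2 :=
    fun hfF => integral_congr_Ioo_of_le hs.le fun x hx => by rw [hfF hx]
  rw [hsq huU, hsq hwW, hsq' hdu, hsq' hdw]
  exact ⟨energy_le_lowerConst_mul hs.le hU hU' hW hW' hrelU hrelU',
    energy_le_upperConst_mul hs.le hU hU' hW hW' hrelU hrelU'⟩

end Backstepping

open Backstepping

theorem backstepping_norm_equivalence_general
    (c α β s_r p : ℝ)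
    (hsr : 0 < s_r) (hp : 0 < p) :
    ∃ δl δu : ℝ, 0 < δl ∧ 0 < δu ∧
      ∀ (s : ℝ) (u w : ℝ → ℝ) (X : ℝ),
        0 < s → s ≤ s_r →
        ContDiffOn ℝ 1 u (Set.Icc 0 s) →
        ContDiffOn ℝ 1 w (Set.Icc 0 s) →
        (∀ x ∈ Set.Icc (0:ℝ) s,
          w x = u x - (c/α) * (∫ y in x..s, (x - y) * u y) - (c/β) * (x - s) * X) →
        δl * ((∫ x in (0:ℝ)..s, (u x)^2) + (∫ x in (0:ℝ)..s, (deriv u x)^2) + X^2) ≤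
            (∫ x in (0:ℝ)..s, (w x)^2) + (∫ x in (0:ℝ)..s, (deriv w x)^2) + p * X^2 ∧
          (∫ x in (0:ℝ)..s, (w x)^2) + (∫ x in (0:ℝ)..s, (deriv w x)^2) + p * X^2 ≤
            δu * ((∫ x in (0:ℝ)..s, (u x)^2) + (∫ x in (0:ℝ)..s, (deriv u x)^2) + X^2) := by
  have hlow := lowerConst_pos (A := c / α) (B := c / β) hsr.le
  refine ⟨min 1 p / lowerConst (c / α) (c / β) s_r, max 1 p * upperConst (c / α) (c / β) s_r,
    div_pos (lt_min one_pos hp) hlow, mul_pos (lt_max_of_lt_left one_pos) (upperConst_pos hsr.le),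
    fun s u w X hs hssr hu hw hrel => ?_⟩
  obtain ⟨hle_low, hle_up⟩ := energy_bounds hs hu hw hrel
  set Eu := (∫ x in (0:ℝ)..s, u x ^ 2) + ∫ x in (0:ℝ)..s, deriv u x ^ 2
  set Ew := (∫ x in (0:ℝ)..s, w x ^ 2) + ∫ x in (0:ℝ)..s, deriv w x ^ 2
  have hEu : 0 ≤ Eu := add_nonneg (integral_nonneg hs.le fun _ _ => sq_nonneg _)
    (integral_nonneg hs.le fun _ _ => sq_nonneg _)
  have hEw : 0 ≤ Ew := add_nonneg (integral_nonneg hs.le fun _ _ => sq_nonneg _)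
    (integral_nonneg hs.le fun _ _ => sq_nonneg _)
  constructor
  · rw [div_mul_eq_mul_div, div_le_iff₀ hlow]
    calc min 1 p * (Eu + X ^ 2) ≤ min 1 p * (lowerConst (c / α) (c / β) s * (Ew + X ^ 2)) := by
          gcongr
      _ ≤ min 1 p * (lowerConst (c / α) (c / β) s_r * (Ew + X ^ 2)) := by
          gcongr; exact lowerConst_mono hs.le hssr
      _ = min 1 p * (Ew + X ^ 2) * lowerConst (c / α) (c / β) s_r := by ring
      _ ≤ (Ew + p * X ^ 2) * lowerConst (c / α) (c / β) s_r := by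
          gcongr; exact min_one_mul_add_le hEw (sq_nonneg X)
  · calc Ew + p * X ^ 2 ≤ max 1 p * (Ew + X ^ 2) := add_mul_le_max_one_mul hEw (sq_nonneg X)
      _ ≤ max 1 p * (upperConst (c / α) (c / β) s * (Eu + X ^ 2)) := by gcongr
      _ ≤ max 1 p * (upperConst (c / α) (c / β) s_r * (Eu + X ^ 2)) := by
          gcongr; exact upperConst_mono hs.le hssr
      _ = _ := by ring

/-- Norm equivalence between the original state `(u, X)` and the
backstepping-transformed state `(w, X)`, with constants independent of the domain
length `s ∈ (0, s_r]` and of the particular functions. -/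
theorem backstepping_norm_equivalence
    (c α β s_r p : ℝ)
    (hc : 0 < c) (hα : 0 < α) (hβ : 0 < β) (hsr : 0 < s_r) (hp : 0 < p) :
    ∃ δl δu : ℝ, 0 < δl ∧ 0 < δu ∧
      ∀ (s : ℝ) (u w : ℝ → ℝ) (X : ℝ),
        0 < s → s ≤ s_r →
        ContDiffOn ℝ 1 u (Set.Icc 0 s) →
        ContDiffOn ℝ 1 w (Set.Icc 0 s) →
        (∀ x ∈ Set.Icc (0:ℝ) s,
          w x = u x - (c/α) * (∫ y in x..s, (x - y) * u y) - (c/β) * (x - s) * X) →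
        δl * ((∫ x in (0:ℝ)..s, (u x)^2) + (∫ x in (0:ℝ)..s, (deriv u x)^2) + X^2) ≤
            (∫ x in (0:ℝ)..s, (w x)^2) + (∫ x in (0:ℝ)..s, (deriv w x)^2) + p * X^2 ∧
          (∫ x in (0:ℝ)..s, (w x)^2) + (∫ x in (0:ℝ)..s, (deriv w x)^2) + p * X^2 ≤
            δu * ((∫ x in (0:ℝ)..s, (u x)^2) + (∫ x in (0:ℝ)..s, (deriv u x)^2) + X^2) :=
  backstepping_norm_equivalence_general c α β s_r p hsr hp
end
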